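/- arXiv:2506.01577 — 11 statements merged into one kernel-verified Lean document; each statement's English description precedes it below -/
import Mathlib

section
/- Let φ : G → H be a map of groups with left defect set D(φ) = {φ(y)⁻¹φ(x)⁻¹φ(xy) : x,y ∈ G}. If D(φ) is finite, then for every x ∈ G there exists an element u in D(φ)·D(φ) such that φ(x)⁻¹ = φ(x⁻¹)·u; in particular the set {φ(x)⁻¹·φ(x⁻¹)⁻¹ : x ∈ G} is finite. -/
open Pointwise

theorem stmt0 {G H : Type*} [Group G] [Group H] (φ : G → H)
    (hD : {h : H | ∃ x y : G, h = (φ y)⁻¹ * (φ x)⁻¹ * φ (x * y)}.Finite) :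
    (∀ x : G, ∃ u ∈ {h : H | ∃ x y : G, h = (φ y)⁻¹ * (φ x)⁻¹ * φ (x * y)} *
        {h : H | ∃ x y : G, h = (φ y)⁻¹ * (φ x)⁻¹ * φ (x * y)},
      (φ x)⁻¹ = φ x⁻¹ * u) ∧
    {h : H | ∃ x : G, h = (φ x)⁻¹ * (φ x⁻¹)⁻¹}.Finite := by
  constructor
  · intro x
    refine ⟨((φ x⁻¹)⁻¹ * (φ x)⁻¹ * φ (x * x⁻¹)) * ((φ (1:G))⁻¹ * (φ (1:G))⁻¹ * φ ((1:G) * 1)),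
      Set.mul_mem_mul ⟨x, x⁻¹, rfl⟩ ⟨1, 1, rfl⟩, ?_⟩
    simp [mul_assoc, mul_inv_cancel_left, inv_mul_cancel_left]
  · have hsub : {h : H | ∃ x : G, h = (φ x)⁻¹ * (φ x⁻¹)⁻¹} ⊆
        (fun d => d * (φ ((1:G) * 1))⁻¹) ''
          {h : H | ∃ x y : G, h = (φ y)⁻¹ * (φ x)⁻¹ * φ (x * y)} := by
      rintro h ⟨x, rfl⟩
      refine ⟨(φ x)⁻¹ * (φ x⁻¹)⁻¹ * φ (x⁻¹ * x), ⟨x⁻¹, x, rfl⟩, ?_⟩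
      simp [mul_assoc, mul_inv_cancel_left, inv_mul_cancel_left]
    exact (hD.image _).subset hsub
end

section
/- Let φ : G → H be a map with finite middle defect set M(φ) = {φ(x)⁻¹φ(xy)φ(y)⁻¹ : x,y ∈ G}. Then for all x,y ∈ G, φ(xy) lies in the finite set φ(x)·(φ(1)⁻¹φ(y)φ(1))·M(φ)²·M(φ)⁻¹, i.e., the set {(φ(x)·φ(1)⁻¹φ(y)φ(1))⁻¹ · φ(xy) : x,y ∈ G} is finite. -/
theorem stmt2 {G H : Type*} [Group G] [Group H] (φ : G → H)
    (hM : {h : H | ∃ x y : G, h = (φ x)⁻¹ * φ (x * y) * (φ y)⁻¹}.Finite) :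
    {h : H | ∃ x y : G, h = (φ x * ((φ 1)⁻¹ * φ y * φ 1))⁻¹ * φ (x * y)}.Finite := by
  apply Set.Finite.subset (((hM.prod hM).image (fun p => (φ 1)⁻¹ * p.1 * p.2⁻¹)))
  rintro h ⟨x, y, rfl⟩
  refine ⟨((φ y)⁻¹ * φ (y * y⁻¹) * (φ y⁻¹)⁻¹,
    (φ (x * y))⁻¹ * φ (x * y * y⁻¹) * (φ y⁻¹)⁻¹), ⟨⟨y, y⁻¹, rfl⟩, ⟨x * y, y⁻¹, rfl⟩⟩, ?_⟩
  simp only [mul_inv_cancel, mul_inv_cancel_right]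
  group
end

section
/- Every unital middle quasi-homomorphism is a quasi-homomorphism: if φ : G → H satisfies φ(1) = 1 and the set M(φ) = {φ(x)⁻¹φ(xy)φ(y)⁻¹ : x,y ∈ G} is finite, then the set D(φ) = {φ(y)⁻¹φ(x)⁻¹φ(xy) : x,y ∈ G} is finite. -/
theorem stmt3 {G H : Type*} [Group G] [Group H] (φ : G → H)
    (hunit : φ 1 = 1)
    (hM : {h : H | ∃ x y : G, h = (φ x)⁻¹ * φ (x * y) * (φ y)⁻¹}.Finite) :
    {h : H | ∃ x y : G, h = (φ y)⁻¹ * (φ x)⁻¹ * φ (x * y)}.Finite := by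
  apply Set.Finite.subset ((hM.prod hM).image (fun p => (p.1 * p.2⁻¹)⁻¹))
  rintro h ⟨x, y, rfl⟩
  refine ⟨((φ (x*y))⁻¹ * φ ((x*y) * y⁻¹) * (φ y⁻¹)⁻¹,
          (φ y)⁻¹ * φ (y * y⁻¹) * (φ y⁻¹)⁻¹),
    ⟨⟨x*y, y⁻¹, rfl⟩, ⟨y, y⁻¹, rfl⟩⟩, ?_⟩
  simp only [mul_inv_cancel, mul_inv_cancel_right, hunit]
  group
end

section
/- Middle quasi-homomorphisms are invariant under right translation of the argument: if φ : G → H has finite middle defect set M(φ) and a ∈ G, then the map ψ defined by ψ(g) = φ(ga) satisfies M(ψ) ⊆ M(φ)·M(φ)⁻¹·φ(a)⁻¹; in particular M(ψ) is finite. -/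
open Pointwise

theorem stmt5 {G H : Type*} [Group G] [Group H] (φ : G → H) (a : G)
    (hM : {h : H | ∃ x y : G, h = (φ x)⁻¹ * φ (x * y) * (φ y)⁻¹}.Finite) :
    {h : H | ∃ x y : G, h = (φ (x * a))⁻¹ * φ (x * y * a) * (φ (y * a))⁻¹} ⊆
      {h : H | ∃ x y : G, h = (φ x)⁻¹ * φ (x * y) * (φ y)⁻¹} *
      {h : H | ∃ x y : G, h = (φ x)⁻¹ * φ (x * y) * (φ y)⁻¹}⁻¹ * {(φ a)⁻¹} ∧
    {h : H | ∃ x y : G, h = (φ (x * a))⁻¹ * φ (x * y * a) * (φ (y * a))⁻¹}.Finite := by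
  have hsub : {h : H | ∃ x y : G, h = (φ (x * a))⁻¹ * φ (x * y * a) * (φ (y * a))⁻¹} ⊆
      {h : H | ∃ x y : G, h = (φ x)⁻¹ * φ (x * y) * (φ y)⁻¹} *
      {h : H | ∃ x y : G, h = (φ x)⁻¹ * φ (x * y) * (φ y)⁻¹}⁻¹ * {(φ a)⁻¹} := by
    rintro h ⟨x, y, rfl⟩
    refine Set.mem_mul.2 ⟨_, Set.mem_mul.2 ⟨_, ⟨x * a, a⁻¹ * y * a, rfl⟩,
      _, Set.inv_mem_inv.2 ⟨a, a⁻¹ * y * a, rfl⟩, rfl⟩, _, rfl, ?_⟩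
    group
  exact ⟨hsub, Set.Finite.subset ((hM.mul hM.inv).mul (Set.finite_singleton _)) hsub⟩
end

section
/- Let φ : G → H be a quasi-homomorphism (D(φ) finite) such that the image φ(G) is contained in a subgroup of the form C·B, where C centralizes the defect subgroup Δ = ⟨D(φ)⟩ and B is a finite subset of H (i.e., φ(G) ⊆ C_H(Δ)·B with B finite). Then for every finite subset S of Δ, the set {φ(y)·s·φ(y)⁻¹ : y ∈ G, s ∈ S} is finite. -/
open Pointwise

private lemma key1 {G H : Type*} [Group G] [Group H] (φ : G → H) (g : G) :
    ∀ d ∈ Subgroup.closure {h : H | ∃ x y : G, h = (φ y)⁻¹ * (φ x)⁻¹ * φ (x * y)},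
      (φ g)⁻¹ * d * φ g ∈
        Subgroup.closure {h : H | ∃ x y : G, h = (φ y)⁻¹ * (φ x)⁻¹ * φ (x * y)} := by
  intro d hd
  set D : Set H := {h : H | ∃ x y : G, h = (φ y)⁻¹ * (φ x)⁻¹ * φ (x * y)} with hDdef
  set Δ := Subgroup.closure D with hΔ
  have hsub : D ⊆ (Δ.comap (MulAut.conj (φ g)⁻¹).toMonoidHom : Subgroup H) := by
    rintro _ ⟨x, y, rfl⟩
    show MulAut.conj (φ g)⁻¹ ((φ y)⁻¹ * (φ x)⁻¹ * φ (x * y)) ∈ Δ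
    have hassoc : φ (x * (y * g)) = φ (x * y * g) := by rw [mul_assoc]
    have hid : MulAut.conj (φ g)⁻¹ ((φ y)⁻¹ * (φ x)⁻¹ * φ (x * y))
        = ((φ g)⁻¹ * (φ y)⁻¹ * φ (y * g)) *
          ((φ (y * g))⁻¹ * (φ x)⁻¹ * φ (x * (y * g))) *
          ((φ g)⁻¹ * (φ (x * y))⁻¹ * φ (x * y * g))⁻¹ := by
      simp only [MulAut.conj_apply, inv_inv, hassoc]
      group
    rw [hid]
    exact mul_mem (mul_mem (Subgroup.subset_closure ⟨y, g, rfl⟩)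
      (Subgroup.subset_closure ⟨x, y * g, rfl⟩))
      (inv_mem (Subgroup.subset_closure ⟨x * y, g, rfl⟩))
  have h2 := (Subgroup.closure_le _).2 hsub hd
  simpa using h2

private lemma key2 {G H : Type*} [Group G] [Group H] (φ : G → H) (g : G) :
    ∀ d ∈ Subgroup.closure {h : H | ∃ x y : G, h = (φ y)⁻¹ * (φ x)⁻¹ * φ (x * y)},
      φ g * d * (φ g)⁻¹ ∈
        Subgroup.closure {h : H | ∃ x y : G, h = (φ y)⁻¹ * (φ x)⁻¹ * φ (x * y)} := by
  intro d hd
  set D : Set H := {h : H | ∃ x y : G, h = (φ y)⁻¹ * (φ x)⁻¹ * φ (x * y)} with hDdef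
  set Δ := Subgroup.closure D with hΔ
  have hone : φ (1 : G) ∈ Δ := by
    have h1 : (φ (1 : G))⁻¹ ∈ D := by
      refine ⟨1, 1, ?_⟩
      rw [mul_one]
      group
    simpa using inv_mem (Subgroup.subset_closure h1)
  have hδ : (φ g⁻¹)⁻¹ * (φ g)⁻¹ * φ 1 * (φ 1)⁻¹ ∈ Δ := by
    refine mul_mem (Subgroup.subset_closure ?_) (inv_mem hone)
    refine ⟨g, g⁻¹, ?_⟩
    rw [mul_inv_cancel]
  have h1 := key1 φ g⁻¹ d hd
  have hid : φ g * d * (φ g)⁻¹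
      = ((φ g⁻¹)⁻¹ * (φ g)⁻¹ * φ 1 * (φ 1)⁻¹)⁻¹ *
        ((φ g⁻¹)⁻¹ * d * φ g⁻¹) *
        ((φ g⁻¹)⁻¹ * (φ g)⁻¹ * φ 1 * (φ 1)⁻¹) := by group
  rw [hid]
  exact mul_mem (mul_mem (inv_mem hδ) h1) hδ

theorem stmt6 {G H : Type*} [Group G] [Group H] (φ : G → H)
    (hD : {h : H | ∃ x y : G, h = (φ y)⁻¹ * (φ x)⁻¹ * φ (x * y)}.Finite)
    (B : Set H) (hB : B.Finite)
    (hcov : Set.range φ ⊆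
      (Subgroup.centralizer
        ((Subgroup.closure {h : H | ∃ x y : G, h = (φ y)⁻¹ * (φ x)⁻¹ * φ (x * y)}) : Set H) :
        Set H) * B) :
    ∀ S : Set H, S.Finite →
      S ⊆ (Subgroup.closure {h : H | ∃ x y : G, h = (φ y)⁻¹ * (φ x)⁻¹ * φ (x * y)} : Set H) →
      {h : H | ∃ y : G, ∃ s ∈ S, h = φ y * s * (φ y)⁻¹}.Finite := by
  intro S hS hSsub
  apply Set.Finite.subset ((hB.prod hS).image (fun p : H × H => p.1 * p.2 * p.1⁻¹))
  rintro h ⟨y, s, hs, rfl⟩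
  obtain ⟨c, hc, b, hb, hcb⟩ := hcov (Set.mem_range_self y)
  have ht : φ y * s * (φ y)⁻¹ ∈
      Subgroup.closure {h : H | ∃ x y : G, h = (φ y)⁻¹ * (φ x)⁻¹ * φ (x * y)} :=
    key2 φ y s (hSsub hs)
  have hcomm : (φ y * s * (φ y)⁻¹) * c = c * (φ y * s * (φ y)⁻¹) :=
    (Subgroup.mem_centralizer_iff.mp hc) _ ht
  have heq : φ y * s * (φ y)⁻¹ = b * s * b⁻¹ := by
    have h3 : c⁻¹ * (φ y * s * (φ y)⁻¹) * c = φ y * s * (φ y)⁻¹ := by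
      rw [mul_assoc, hcomm, ← mul_assoc, inv_mul_cancel, one_mul]
    have h4 : c⁻¹ * ((c * b) * s * (c * b)⁻¹) * c = b * s * b⁻¹ := by group
    rw [← h3, ← hcb, h4]
  exact ⟨(b, s), ⟨hb, hs⟩, heq.symm⟩
end

section
/- Let φ : G → H be a map with finite middle defect set M(φ). Then the sets D(φ) and {φ(y)⁻¹·φ(1)⁻¹·φ(y) : y ∈ G} are left-commensurable: D(φ) ⊆ {(φ(1)⁻¹)^{φ(y)} : y∈G}·M(φ)·M(φ)⁻¹ and {(φ(1)⁻¹)^{φ(y)} : y∈G} ⊆ D(φ)·M(φ)·M(φ)⁻¹. In particular, φ is a quasi-homomorphism if and only if the set {φ(y)⁻¹φ(1)⁻¹φ(y) : y ∈ G} is finite. -/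
open Pointwise

theorem stmt8 {G H : Type*} [Group G] [Group H] (φ : G → H)
    (hM : {h : H | ∃ x y : G, h = (φ x)⁻¹ * φ (x * y) * (φ y)⁻¹}.Finite) :
    ({h : H | ∃ x y : G, h = (φ y)⁻¹ * (φ x)⁻¹ * φ (x * y)} ⊆
      {h : H | ∃ y : G, h = (φ y)⁻¹ * (φ 1)⁻¹ * φ y} *
      {h : H | ∃ x y : G, h = (φ x)⁻¹ * φ (x * y) * (φ y)⁻¹} *
      {h : H | ∃ x y : G, h = (φ x)⁻¹ * φ (x * y) * (φ y)⁻¹}⁻¹) ∧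
    ({h : H | ∃ y : G, h = (φ y)⁻¹ * (φ 1)⁻¹ * φ y} ⊆
      {h : H | ∃ x y : G, h = (φ y)⁻¹ * (φ x)⁻¹ * φ (x * y)} *
      {h : H | ∃ x y : G, h = (φ x)⁻¹ * φ (x * y) * (φ y)⁻¹} *
      {h : H | ∃ x y : G, h = (φ x)⁻¹ * φ (x * y) * (φ y)⁻¹}⁻¹) ∧
    ({h : H | ∃ x y : G, h = (φ y)⁻¹ * (φ x)⁻¹ * φ (x * y)}.Finite ↔
      {h : H | ∃ y : G, h = (φ y)⁻¹ * (φ 1)⁻¹ * φ y}.Finite) := by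
  set M := {h : H | ∃ x y : G, h = (φ x)⁻¹ * φ (x * y) * (φ y)⁻¹} with hMdef
  set D := {h : H | ∃ x y : G, h = (φ y)⁻¹ * (φ x)⁻¹ * φ (x * y)} with hDdef
  set C := {h : H | ∃ y : G, h = (φ y)⁻¹ * (φ 1)⁻¹ * φ y} with hCdef
  have hsub1 : D ⊆ C * M * M⁻¹ := by
    rintro h ⟨x, y, rfl⟩
    have hc : (φ y)⁻¹ * (φ 1)⁻¹ * φ y ∈ C := ⟨y, rfl⟩
    have hm1 : (φ y)⁻¹ * φ (y * y⁻¹) * (φ y⁻¹)⁻¹ ∈ M := ⟨y, y⁻¹, rfl⟩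
    have hm2 : ((φ (x * y))⁻¹ * φ (x * y * y⁻¹) * (φ y⁻¹)⁻¹)⁻¹ ∈ M⁻¹ := by
      rw [Set.mem_inv, inv_inv]; exact ⟨x * y, y⁻¹, rfl⟩
    have := Set.mul_mem_mul (Set.mul_mem_mul hc hm1) hm2
    convert this using 1
    simp only [mul_inv_cancel, mul_inv_cancel_right]
    group
  have hsub2 : C ⊆ D := by
    rintro h ⟨y, rfl⟩
    exact ⟨1, y, by rw [one_mul]⟩
  refine ⟨hsub1, ?_, ?_⟩
  · intro h hh
    have hd : h ∈ D := hsub2 hh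
    have hm : (φ 1)⁻¹ * φ (1 * 1) * (φ 1)⁻¹ ∈ M := ⟨1, 1, rfl⟩
    have hm' : ((φ 1)⁻¹ * φ (1 * 1) * (φ 1)⁻¹)⁻¹ ∈ M⁻¹ := by
      rw [Set.mem_inv, inv_inv]; exact hm
    have := Set.mul_mem_mul (Set.mul_mem_mul hd hm) hm'
    convert this using 1
    group
  · constructor
    · exact fun hD => hD.subset hsub2
    · intro hC
      exact ((hC.mul hM).mul hM.inv).subset hsub1
end

section
/- Let φ : G → H be any map, and let A(φ) = {φ(x₁)φ(x₂)⁻¹φ(x₃)φ(x₄)⁻¹ : x₁x₂⁻¹x₃x₄⁻¹ = 1}. Then φ(1)·M(φ) ⊆ A(φ) ⊆ M(φ)⁻¹·M(φ). Consequently, φ is a middle quasi-homomorphism if and only if A(φ) is finite. -/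
open Pointwise

theorem stmt9 {G H : Type*} [Group G] [Group H] (φ : G → H) :
    ({φ 1} * {h : H | ∃ x y : G, h = (φ x)⁻¹ * φ (x * y) * (φ y)⁻¹} ⊆
      {h : H | ∃ x₁ x₂ x₃ x₄ : G, x₁ * x₂⁻¹ * x₃ * x₄⁻¹ = 1 ∧
        h = φ x₁ * (φ x₂)⁻¹ * φ x₃ * (φ x₄)⁻¹}) ∧
    ({h : H | ∃ x₁ x₂ x₃ x₄ : G, x₁ * x₂⁻¹ * x₃ * x₄⁻¹ = 1 ∧
        h = φ x₁ * (φ x₂)⁻¹ * φ x₃ * (φ x₄)⁻¹} ⊆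
      {h : H | ∃ x y : G, h = (φ x)⁻¹ * φ (x * y) * (φ y)⁻¹}⁻¹ *
      {h : H | ∃ x y : G, h = (φ x)⁻¹ * φ (x * y) * (φ y)⁻¹}) ∧
    ({h : H | ∃ x y : G, h = (φ x)⁻¹ * φ (x * y) * (φ y)⁻¹}.Finite ↔
      {h : H | ∃ x₁ x₂ x₃ x₄ : G, x₁ * x₂⁻¹ * x₃ * x₄⁻¹ = 1 ∧
        h = φ x₁ * (φ x₂)⁻¹ * φ x₃ * (φ x₄)⁻¹}.Finite) := by
  set M : Set H := {h : H | ∃ x y : G, h = (φ x)⁻¹ * φ (x * y) * (φ y)⁻¹} with hMdef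
  set A : Set H := {h : H | ∃ x₁ x₂ x₃ x₄ : G, x₁ * x₂⁻¹ * x₃ * x₄⁻¹ = 1 ∧
        h = φ x₁ * (φ x₂)⁻¹ * φ x₃ * (φ x₄)⁻¹} with hAdef
  have h1 : {φ 1} * M ⊆ A := by
    rintro h hh
    rw [Set.singleton_mul] at hh
    obtain ⟨m, ⟨x, y, rfl⟩, rfl⟩ := hh
    exact ⟨1, x, x * y, y, by group, by group⟩
  have h2 : A ⊆ M⁻¹ * M := by
    rintro h ⟨x₁, x₂, x₃, x₄, hq, rfl⟩
    have hx4 : x₄ = x₁ * x₂⁻¹ * x₃ := (mul_inv_eq_one.mp hq).symm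
    have key : φ x₁ * (φ x₂)⁻¹ * φ x₃ * (φ x₄)⁻¹ =
        (φ x₁ * (φ x₂)⁻¹ * φ (x₂ * x₁⁻¹)) *
          ((φ (x₂ * x₁⁻¹))⁻¹ * φ x₃ * (φ x₄)⁻¹) := by group
    rw [key]
    apply Set.mul_mem_mul
    · rw [Set.mem_inv]
      refine ⟨x₂ * x₁⁻¹, x₁, ?_⟩
      rw [show x₂ * x₁⁻¹ * x₁ = x₂ by group]
      group
    · refine ⟨x₂ * x₁⁻¹, x₄, ?_⟩
      rw [show x₂ * x₁⁻¹ * x₄ = x₃ from by rw [hx4]; group]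
  refine ⟨h1, h2, ?_, ?_⟩
  · intro hM
    exact ((hM.inv.mul hM)).subset h2
  · intro hA
    have : M ⊆ (fun h => (φ 1)⁻¹ * h) '' A := by
      intro m hm
      exact ⟨φ 1 * m, h1 (Set.mul_mem_mul rfl hm), by group⟩
    exact (hA.image _).subset this
end

section
/- Let Γ be a group, Λ ⊆ Γ a left quasi-subgroup (i.e., there are finite F₁, F₂ with Λ⁻¹ ⊆ ΛF₁ and Λ² ⊆ ΛF₂), and let a ∈ Γ belong to the commensurator Comm_Γ(Λ). Then the right translate Λa is also a left quasi-subgroup of Γ. -/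
open Pointwise

def IsLeftQuasiSubgroup {Γ : Type*} [Group Γ] (Λ : Set Γ) : Prop :=
  ∃ F₁ F₂ : Set Γ, F₁.Finite ∧ F₂.Finite ∧ Λ⁻¹ ⊆ Λ * F₁ ∧ Λ * Λ ⊆ Λ * F₂

def LComm {Γ : Type*} [Group Γ] (Λ : Set Γ) : Set Γ :=
  {g : Γ | ∃ F : Set Γ, F.Finite ∧ (fun x => g * x * g⁻¹) '' Λ ⊆ Λ * F}

def RComm {Γ : Type*} [Group Γ] (Λ : Set Γ) : Set Γ := (LComm Λ⁻¹)⁻¹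

def CommSet {Γ : Type*} [Group Γ] (Λ : Set Γ) : Set Γ := LComm Λ ∩ RComm Λ

theorem stmt10 {Γ : Type*} [Group Γ] (Λ : Set Γ) (a : Γ)
    (hΛ : IsLeftQuasiSubgroup Λ) (ha : a ∈ CommSet Λ) :
    IsLeftQuasiSubgroup (Λ * {a}) := by
  obtain ⟨F₁, F₂, hF₁, hF₂, h1, h2⟩ := hΛ
  obtain ⟨⟨F, hF, hL⟩, hR⟩ := ha
  have hR' : a⁻¹ ∈ LComm Λ⁻¹ := hR
  obtain ⟨G, hG, hRG⟩ := hR'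
  refine ⟨{a⁻¹} * F₁ * G * {a⁻¹}, {a⁻¹} * F₂ * F * {a} * {a}, ?_, ?_, ?_, ?_⟩
  · exact (((Set.finite_singleton _).mul hF₁).mul hG).mul (Set.finite_singleton _)
  · exact ((((Set.finite_singleton _).mul hF₂).mul hF).mul (Set.finite_singleton _)).mul
      (Set.finite_singleton _)
  · intro x hx
    have hx' : x⁻¹ ∈ Λ * {a} := hx
    obtain ⟨y, hy, z, hz, hya⟩ := hx'
    rw [Set.mem_singleton_iff] at hz
    subst z
    have hxeq : x = a⁻¹ * y⁻¹ := by
      have h := congrArg Inv.inv hya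
      simpa [mul_inv_rev] using h.symm
    have hmem : a⁻¹ * y⁻¹ * (a⁻¹)⁻¹ ∈ Λ⁻¹ * G :=
      hRG ⟨y⁻¹, Set.inv_mem_inv.mpr hy, rfl⟩
    rw [inv_inv] at hmem
    obtain ⟨u, hu, g, hg, huge⟩ := hmem
    obtain ⟨v, hv, f, hf, hvf'⟩ := h1 hu
    have hvf : v * f = u := hvf'
    have huge' : u * g = a⁻¹ * y⁻¹ * a := huge
    refine ⟨v * a, ⟨v, hv, a, rfl, rfl⟩,
      a⁻¹ * f * g * a⁻¹,
      ⟨a⁻¹ * f * g, ⟨a⁻¹ * f, ⟨a⁻¹, rfl, f, hf, rfl⟩, g, hg, rfl⟩, a⁻¹, rfl, rfl⟩, ?_⟩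
    calc v * a * (a⁻¹ * f * g * a⁻¹) = v * f * g * a⁻¹ := by group
      _ = u * g * a⁻¹ := by rw [hvf]
      _ = a⁻¹ * y⁻¹ * a * a⁻¹ := by rw [huge']
      _ = x := by rw [hxeq]; group
  · intro x hx
    obtain ⟨p, hp, q, hq, hpq⟩ := hx
    obtain ⟨l₁, hl₁, z₁, hz₁, hp'⟩ := hp
    obtain ⟨l₂, hl₂, z₂, hz₂, hq'⟩ := hq
    rw [Set.mem_singleton_iff] at hz₁ hz₂
    subst z₁; subst z₂
    have hmem : a * l₂ * a⁻¹ ∈ Λ * F := hL ⟨l₂, hl₂, rfl⟩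
    obtain ⟨m, hm, f, hf, hmf⟩ := hmem
    have hmem2 : l₁ * m ∈ Λ * F₂ := h2 ⟨l₁, hl₁, m, hm, rfl⟩
    obtain ⟨n, hn, f₂, hf₂, hnf'⟩ := hmem2
    have hnf : n * f₂ = l₁ * m := hnf'
    have hmf2 : m * f = a * l₂ * a⁻¹ := hmf
    refine ⟨n * a, ⟨n, hn, a, rfl, rfl⟩,
      a⁻¹ * f₂ * f * a * a,
      ⟨a⁻¹ * f₂ * f * a, ⟨a⁻¹ * f₂ * f, ⟨a⁻¹ * f₂, ⟨a⁻¹, rfl, f₂, hf₂, rfl⟩, f, hf, rfl⟩,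
        a, rfl, rfl⟩, a, rfl, rfl⟩, ?_⟩
    calc n * a * (a⁻¹ * f₂ * f * a * a) = n * f₂ * f * a * a := by group
      _ = l₁ * m * f * a * a := by rw [show n * f₂ * f = l₁ * m * f by rw [hnf]]
      _ = l₁ * (m * f) * a * a := by group
      _ = l₁ * (a * l₂ * a⁻¹) * a * a := by rw [hmf2]
      _ = x := by rw [← hpq, ← hp', ← hq']; group
end

section
/- Let Γ be a group and Λ a symmetric left quasi-subgroup of Γ (Λ = Λ⁻¹). If a ∈ Γ is such that Λ·a is a left quasi-subgroup of Γ, then a ∈ Comm_Γ(Λ). -/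
open Pointwise

theorem stmt11 {Γ : Type*} [Group Γ] (Λ : Set Γ) (a : Γ)
    (hsym : Λ = Λ⁻¹) (hΛ : IsLeftQuasiSubgroup Λ)
    (hΛa : IsLeftQuasiSubgroup (Λ * {a})) :
    a ∈ CommSet Λ := by
  obtain ⟨F₁, F₂, hF₁, hF₂, h1, h2⟩ := hΛ
  obtain ⟨G₁, G₂, hG₁, hG₂, g1, g2⟩ := hΛa
  rcases Set.eq_empty_or_nonempty Λ with h | ⟨l0, hl0⟩
  · constructor
    · exact ⟨∅, Set.finite_empty, by simp [h]⟩
    · refine Set.mem_inv.mpr ⟨∅, Set.finite_empty, ?_⟩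
      simp [← hsym, h]
  · have hl0' : l0⁻¹ ∈ Λ := by rw [hsym]; exact Set.inv_mem_inv.mpr hl0
    constructor
    · -- a ∈ LComm Λ
      refine ⟨F₂ * ({a} * G₂ * {a⁻¹ * a⁻¹}), hF₂.mul ((Set.finite_singleton a).mul hG₂
        |>.mul (Set.finite_singleton _)), ?_⟩
    
      rintro _ ⟨x, hx, rfl⟩
      have h3 : (l0 * a) * (x * a) ∈ Λ * {a} * G₂ :=
        g2 (Set.mul_mem_mul (Set.mul_mem_mul hl0 rfl) (Set.mul_mem_mul hx rfl))
      obtain ⟨_, ⟨l1, hl1, b, hb, rfl⟩, g, hg, heq⟩ := h3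
      rw [Set.mem_singleton_iff] at hb; rw [hb] at heq
      have h4 : l0⁻¹ * l1 ∈ Λ * F₂ := h2 (Set.mul_mem_mul hl0' hl1)
      obtain ⟨n, hn, f, hf, heq2⟩ := h4
      refine ⟨n, hn, f * (a * g * (a⁻¹ * a⁻¹)),
        Set.mul_mem_mul hf (Set.mul_mem_mul (Set.mul_mem_mul rfl hg) rfl), ?_⟩
      have : l1 * a * g = l0 * a * (x * a) := heq
      have hx' : x = a⁻¹ * (l0⁻¹ * (l1 * a * g)) * a⁻¹ := by rw [this]; group
      have heq2' : n * f = l0⁻¹ * l1 := heq2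
      show n * (f * (a * g * (a⁻¹ * a⁻¹))) = a * x * a⁻¹
      rw [hx', show n * (f * (a * g * (a⁻¹ * a⁻¹))) = n * f * (a * g * (a⁻¹ * a⁻¹)) by
        group, heq2']
      group
    · -- a ∈ RComm Λ
      refine Set.mem_inv.mpr ⟨{a} * G₁ * {a}, ((Set.finite_singleton a).mul hG₁).mul
        (Set.finite_singleton a), ?_⟩
      rintro _ ⟨x, hx, rfl⟩
      have hx' : x⁻¹ ∈ Λ := Set.mem_inv.mp hx
      have h3 : a⁻¹ * x⁻¹⁻¹ ∈ Λ * {a} * G₁ := by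
        have : (x⁻¹ * a)⁻¹ ∈ (Λ * {a})⁻¹ :=
          Set.inv_mem_inv.mpr (Set.mul_mem_mul hx' rfl)
        have h4 := g1 this
        simpa [mul_inv_rev] using h4
      obtain ⟨_, ⟨l1, hl1, b, hb, rfl⟩, g, hg, heq⟩ := h3
      rw [Set.mem_singleton_iff] at hb; rw [hb] at heq
      rw [← hsym]
      refine ⟨l1, hl1, a * g * a, Set.mul_mem_mul (Set.mul_mem_mul rfl hg) rfl, ?_⟩
      have : l1 * a * g = a⁻¹ * x⁻¹⁻¹ := heq
      simp only [inv_inv] at this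
      calc l1 * (a * g * a) = l1 * a * g * a := by group
        _ = a⁻¹ * x * a := by rw [this]
        _ = _ := by group
end

section
/- Let φ : G → H be a unital map (φ(1)=1). Then φ is quadratic (i.e., (𝔡_{g₁,g₂,g₃}φ)(1) = 1 for all g₁,g₂,g₃ ∈ G) if and only if the map μ_φ on multiplicative quadruples, defined by μ_φ(x₁,x₂,x₃,x₄) = φ(x₁)φ(x₂)⁻¹φ(x₃)φ(x₄)⁻¹, is invariant under the diagonal right G-action: μ_φ(x₁t, x₂t, x₃t, x₄t) = μ_φ(x₁,x₂,x₃,x₄) for all multiplicative quadruples (x₁,x₂,x₃,x₄) and all t ∈ G. -/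
def diff {G H : Type*} [Group G] [Group H] (g : G) (φ : G → H) : G → H :=
  fun x => φ (g * x) * (φ x)⁻¹

theorem stmt15 {G H : Type*} [Group G] [Group H] (φ : G → H) (hunit : φ 1 = 1) :
    (∀ g₁ g₂ g₃ : G, diff g₁ (diff g₂ (diff g₃ φ)) 1 = 1) ↔
    (∀ x₁ x₂ x₃ x₄ t : G, x₁ * x₂⁻¹ * x₃ * x₄⁻¹ = 1 →
      φ (x₁ * t) * (φ (x₂ * t))⁻¹ * φ (x₃ * t) * (φ (x₄ * t))⁻¹ =
        φ x₁ * (φ x₂)⁻¹ * φ x₃ * (φ x₄)⁻¹) := by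
  constructor
  · intro h x₁ x₂ x₃ x₄ t hx
    -- key identity from the quadraticity hypothesis
    have key : ∀ a b c : G,
        φ (a * b * c) * (φ (b * c))⁻¹ * φ c * (φ (a * c))⁻¹ =
          φ (a * b) * (φ b)⁻¹ * (φ a)⁻¹ := by
      intro a b c
      have H := h c b a
      simp only [diff, mul_one, hunit, inv_one] at H
      have H' : (φ (a * (b * c)) * (φ (b * c))⁻¹ * (φ (a * c) * (φ c)⁻¹)⁻¹) *
          (φ (a * b) * (φ b)⁻¹ * (φ a)⁻¹)⁻¹ = 1 := by
        rw [← H]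
      rw [mul_inv_eq_one] at H'
      calc φ (a * b * c) * (φ (b * c))⁻¹ * φ c * (φ (a * c))⁻¹
          = φ (a * (b * c)) * (φ (b * c))⁻¹ * (φ (a * c) * (φ c)⁻¹)⁻¹ * 1 := by
            rw [mul_assoc a b c]; group
        _ = φ (a * b) * (φ b)⁻¹ * (φ a)⁻¹ := by rw [← H']; group
    have h4 : x₁ * x₂⁻¹ * x₃ = x₄ := by rwa [mul_inv_eq_one] at hx
    subst h4
    have e1 := key (x₁ * x₂⁻¹) (x₂ * x₃⁻¹) (x₃ * t)
    have e2 := key (x₁ * x₂⁻¹) (x₂ * x₃⁻¹) x₃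
    have r1 : x₁ * x₂⁻¹ * (x₂ * x₃⁻¹) * (x₃ * t) = x₁ * t := by group
    have r2 : x₂ * x₃⁻¹ * (x₃ * t) = x₂ * t := by group
    have r3 : x₁ * x₂⁻¹ * (x₃ * t) = x₁ * x₂⁻¹ * x₃ * t := by group
    have r1' : x₁ * x₂⁻¹ * (x₂ * x₃⁻¹) * x₃ = x₁ := by group
    have r2' : x₂ * x₃⁻¹ * x₃ = x₂ := by group
    rw [r1, r2, r3] at e1
    rw [r1', r2'] at e2
    rw [e1, ← e2]
  · intro h g₁ g₂ g₃
    have hm : (g₃ * g₂) * g₂⁻¹ * 1 * g₃⁻¹ = 1 := by group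
    have H := h (g₃ * g₂) g₂ 1 g₃ g₁ hm
    simp only [one_mul, hunit, inv_one, mul_one] at H
    simp only [diff, mul_one, hunit, inv_one]
    rw [mul_assoc g₃ g₂ g₁] at H
    rw [mul_inv_eq_one]
    calc φ (g₃ * (g₂ * g₁)) * (φ (g₂ * g₁))⁻¹ * (φ (g₃ * g₁) * (φ g₁)⁻¹)⁻¹
        = φ (g₃ * (g₂ * g₁)) * (φ (g₂ * g₁))⁻¹ * φ g₁ * (φ (g₃ * g₁))⁻¹ := by group
      _ = φ (g₃ * g₂) * (φ g₂)⁻¹ * (φ g₃)⁻¹ := H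
      _ = φ (g₃ * g₂) * (φ g₂)⁻¹ * (φ g₃)⁻¹ := rfl
end

section
/- Let φ : ℤ → H be a unital quadratic map and set a = φ(1), b = φ(2). Then the commutator [a,b] = a⁻¹b⁻¹ab commutes with b⁻¹a². -/
theorem stmt17 {H : Type*} [Group H] (φ : ℤ → H) (hunit : φ 0 = 1)
    (hquad : ∀ g₁ g₂ g₃ : ℤ,
      φ (g₃ + g₂ + g₁) * (φ (g₂ + g₁))⁻¹ * φ g₁ * (φ (g₃ + g₁))⁻¹ *
        φ g₃ * (φ 0)⁻¹ * φ g₂ * (φ (g₃ + g₂))⁻¹ = 1) :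
    Commute ((φ 1)⁻¹ * (φ 2)⁻¹ * φ 1 * φ 2) ((φ 2)⁻¹ * (φ 1) ^ 2) := by
  have h1 := hquad 1 1 1
  have h2 := hquad 1 1 2
  have h3 := hquad 1 2 1
  norm_num [hunit] at h1 h2 h3
  set a := φ 1 with ha
  set b := φ 2 with hb
  set c := φ 3 with hc
  set d := φ 4 with hd
  -- h1 : c * b⁻¹ * a * b⁻¹ * a * a * b⁻¹ = 1
  -- h2 : d * b⁻¹ * a * c⁻¹ * b * a * c⁻¹ = 1
  -- h3 : d * c⁻¹ * a * b⁻¹ * a * b * c⁻¹ = 1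
  have e1 : c = b * a⁻¹ * a⁻¹ * b * a⁻¹ * b := by
    have h1' : c * (b⁻¹ * a * b⁻¹ * a * a * b⁻¹) = 1 := by rw [← h1]; group
    calc c = (b⁻¹ * a * b⁻¹ * a * a * b⁻¹)⁻¹ := eq_inv_of_mul_eq_one_left h1'
    _ = b * a⁻¹ * a⁻¹ * b * a⁻¹ * b := by group
  have hd2 : d = (b⁻¹ * a * c⁻¹ * b * a * c⁻¹)⁻¹ := by
    apply eq_inv_of_mul_eq_one_left
    rw [← h2]; group
  have hd3 : d = (c⁻¹ * a * b⁻¹ * a * b * c⁻¹)⁻¹ := by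
    apply eq_inv_of_mul_eq_one_left
    rw [← h3]; group
  have key : a⁻¹ * b⁻¹ * c * a⁻¹ * b = b⁻¹ * a⁻¹ * b * a⁻¹ * c := by
    apply mul_left_cancel (a := c)
    calc c * (a⁻¹ * b⁻¹ * c * a⁻¹ * b) = (b⁻¹ * a * c⁻¹ * b * a * c⁻¹)⁻¹ := by group
    _ = d := hd2.symm
    _ = (c⁻¹ * a * b⁻¹ * a * b * c⁻¹)⁻¹ := hd3
    _ = c * (b⁻¹ * a⁻¹ * b * a⁻¹ * c) := by group
  have key2 : a⁻¹ * b⁻¹ * (b * a⁻¹ * a⁻¹ * b * a⁻¹ * b) * a⁻¹ * b =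
      b⁻¹ * a⁻¹ * b * a⁻¹ * (b * a⁻¹ * a⁻¹ * b * a⁻¹ * b) := by
    rw [← e1]; exact key
  show (a⁻¹ * b⁻¹ * a * b) * (b⁻¹ * a ^ 2) = (b⁻¹ * a ^ 2) * (a⁻¹ * b⁻¹ * a * b)
  calc (a⁻¹ * b⁻¹ * a * b) * (b⁻¹ * a ^ 2)
      = a⁻¹ * a⁻¹ * (b * a⁻¹ * b) *
        (a⁻¹ * b⁻¹ * (b * a⁻¹ * a⁻¹ * b * a⁻¹ * b) * a⁻¹ * b)⁻¹ := by group
    _ = a⁻¹ * a⁻¹ * (b * a⁻¹ * b) *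
        (b⁻¹ * a⁻¹ * b * a⁻¹ * (b * a⁻¹ * a⁻¹ * b * a⁻¹ * b))⁻¹ := by rw [key2]
    _ = (b⁻¹ * a ^ 2) * (a⁻¹ * b⁻¹ * a * b) := by group
end
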